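/- arXiv:1912.05386 — 10 statements merged into one kernel-verified Lean document; each statement's English description precedes it below -/
import Mathlib

section
/- Let f, g be orientation-preserving homeomorphisms of the real line satisfying f g f⁻¹ = g (commuting case) or f g f⁻¹ = g⁻¹ (Klein bottle case). If both f and g have fixed points, then f and g have a common fixed point. -/
private lemma key_up (h g : ℝ ≃o ℝ) (hinv : ∀ x, g x = x → g (h x) = h x)
    (b c : ℝ) (hb : g b = b) (hc : h c = c) (hbc : b ≤ c) (hhb : b ≤ h b) :
    ∃ x, h x = x ∧ g x = x := by
  set a : ℕ → ℝ := fun n => h^[n] b with ha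
  have ha_succ : ∀ n, a (n + 1) = h (a n) := fun n => Function.iterate_succ_apply' h n b
  have hstep : ∀ n, a n ≤ a (n + 1) := by
    intro n
    induction n with
    | zero => simpa [ha] using hhb
    | succ k ih =>
        calc a (k + 1) = h (a k) := ha_succ _
          _ ≤ h (a (k + 1)) := h.monotone ih
          _ = a (k + 1 + 1) := (ha_succ _).symm
  have hmono : Monotone a := monotone_nat_of_le_succ hstep
  have hbdd : ∀ n, a n ≤ c := by
    intro n
    induction n with
    | zero => simpa [ha] using hbc
    | succ k ih => rw [ha_succ, ← hc]; exact h.monotone ih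
  have hgfix : ∀ n, g (a n) = a n := by
    intro n
    induction n with
    | zero => simpa [ha] using hb
    | succ k ih => rw [ha_succ]; exact hinv _ ih
  have hBdd : BddAbove (Set.range a) := ⟨c, by rintro x ⟨n, rfl⟩; exact hbdd n⟩
  set L := ⨆ n, a n with hL
  have htend : Filter.Tendsto a Filter.atTop (nhds L) := tendsto_atTop_ciSup hmono hBdd
  have htend' : Filter.Tendsto (fun n => a (n + 1)) Filter.atTop (nhds L) :=
    htend.comp (Filter.tendsto_add_atTop_nat 1)
  have hhL : h L = L := by
    have h1 : Filter.Tendsto (fun n => h (a n)) Filter.atTop (nhds (h L)) :=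
      (h.continuous.tendsto L).comp htend
    have h2 : Filter.Tendsto (fun n => h (a n)) Filter.atTop (nhds L) := by
      simpa [ha_succ] using htend'
    exact tendsto_nhds_unique h1 h2
  have hgL : g L = L := by
    have h1 : Filter.Tendsto (fun n => g (a n)) Filter.atTop (nhds (g L)) :=
      (g.continuous.tendsto L).comp htend
    have h2 : Filter.Tendsto (fun n => g (a n)) Filter.atTop (nhds L) := by
      simpa [hgfix] using htend
    exact tendsto_nhds_unique h1 h2
  exact ⟨L, hhL, hgL⟩

private lemma key_down (h g : ℝ ≃o ℝ) (hinv : ∀ x, g x = x → g (h x) = h x)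
    (b c : ℝ) (hb : g b = b) (hc : h c = c) (hcb : c ≤ b) (hhb : h b ≤ b) :
    ∃ x, h x = x ∧ g x = x := by
  set a : ℕ → ℝ := fun n => h^[n] b with ha
  have ha_succ : ∀ n, a (n + 1) = h (a n) := fun n => Function.iterate_succ_apply' h n b
  have hstep : ∀ n, a (n + 1) ≤ a n := by
    intro n
    induction n with
    | zero => simpa [ha] using hhb
    | succ k ih =>
        calc a (k + 1 + 1) = h (a (k + 1)) := ha_succ _
          _ ≤ h (a k) := h.monotone ih
          _ = a (k + 1) := (ha_succ _).symm
  have hmono : Antitone a := antitone_nat_of_succ_le hstep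
  have hbdd : ∀ n, c ≤ a n := by
    intro n
    induction n with
    | zero => simpa [ha] using hcb
    | succ k ih => rw [ha_succ, ← hc]; exact h.monotone ih
  have hgfix : ∀ n, g (a n) = a n := by
    intro n
    induction n with
    | zero => simpa [ha] using hb
    | succ k ih => rw [ha_succ]; exact hinv _ ih
  have hBdd : BddBelow (Set.range a) := ⟨c, by rintro x ⟨n, rfl⟩; exact hbdd n⟩
  set L := ⨅ n, a n with hL
  have htend : Filter.Tendsto a Filter.atTop (nhds L) := tendsto_atTop_ciInf hmono hBdd
  have htend' : Filter.Tendsto (fun n => a (n + 1)) Filter.atTop (nhds L) :=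
    htend.comp (Filter.tendsto_add_atTop_nat 1)
  have hhL : h L = L := by
    have h1 : Filter.Tendsto (fun n => h (a n)) Filter.atTop (nhds (h L)) :=
      (h.continuous.tendsto L).comp htend
    have h2 : Filter.Tendsto (fun n => h (a n)) Filter.atTop (nhds L) := by
      simpa [ha_succ] using htend'
    exact tendsto_nhds_unique h1 h2
  have hgL : g L = L := by
    have h1 : Filter.Tendsto (fun n => g (a n)) Filter.atTop (nhds (g L)) :=
      (g.continuous.tendsto L).comp htend
    have h2 : Filter.Tendsto (fun n => g (a n)) Filter.atTop (nhds L) := by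
      simpa [hgfix] using htend
    exact tendsto_nhds_unique h1 h2
  exact ⟨L, hhL, hgL⟩

/-- If `f, g` are orientation-preserving homeomorphisms of ℝ (order isomorphisms)
with `f g f⁻¹ = g` or `f g f⁻¹ = g⁻¹`, and both have fixed points, then they have a
common fixed point. -/
theorem stmt_0 (f g : ℝ ≃o ℝ)
    (hrel : (∀ x : ℝ, f (g (f.symm x)) = g x) ∨ (∀ x : ℝ, f (g (f.symm x)) = g.symm x))
    (hf : ∃ x : ℝ, f x = x) (hg : ∃ x : ℝ, g x = x) :
    ∃ x : ℝ, f x = x ∧ g x = x := by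
  obtain ⟨c, hc⟩ := hf
  obtain ⟨b, hb⟩ := hg
  -- invariance of Fix(g) under f and f.symm
  have hinvf : ∀ x, g x = x → g (f x) = f x := by
    intro x hx
    rcases hrel with hr | hr
    · have := hr (f x)
      rw [f.symm_apply_apply, hx] at this
      exact this.symm
    · have := hr (f x)
      rw [f.symm_apply_apply, hx] at this
      have h2 := congrArg g this
      rw [g.apply_symm_apply] at h2
      exact h2
  have hinvs : ∀ x, g x = x → g (f.symm x) = f.symm x := by
    intro x hx
    rcases hrel with hr | hr
    · have := hr x
      rw [hx] at this
      have := this.trans (f.apply_symm_apply x).symm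
      exact f.injective this
    · have := hr x
      have hx' : g.symm x = x := g.symm_apply_eq.mpr hx.symm
      rw [hx'] at this
      have := this.trans (f.apply_symm_apply x).symm
      exact f.injective this
  have hcs : f.symm c = c := by rw [← hc, f.symm_apply_apply, hc]
  rcases lt_trichotomy (f b) b with hfb | hfb | hfb
  · -- f b < b
    rcases le_total c b with hcb | hbc
    · exact key_down f g hinvf b c hb hc hcb hfb.le
    · -- f.symm b > b
      have hsb : b ≤ f.symm b := by
        rw [← f.le_iff_le, f.apply_symm_apply]; exact hfb.le
      obtain ⟨L, hL1, hL2⟩ := key_up f.symm g hinvs b c hb hcs hbc hsb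
      refine ⟨L, ?_, hL2⟩
      rw [← hL1, f.apply_symm_apply, hL1]
  · exact ⟨b, hfb, hb⟩
  · rcases le_total b c with hbc | hcb
    · exact key_up f g hinvf b c hb hc hbc hfb.le
    · have hsb : f.symm b ≤ b := by
        rw [← f.le_iff_le, f.apply_symm_apply]; exact hfb.le
      obtain ⟨L, hL1, hL2⟩ := key_down f.symm g hinvs b c hb hcs hcb hsb
      refine ⟨L, ?_, hL2⟩
      rw [← hL1, f.apply_symm_apply, hL1]
end

section
/- Let f, g be orientation-preserving homeomorphisms of the real line satisfying f ∘ g ∘ f⁻¹ = g⁻¹. Then every fixed point of f is a fixed point of g, i.e. Fix(f) ⊆ Fix(g). -/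
/-- If `f, g` are orientation-preserving homeomorphisms of ℝ with the Klein bottle
relation `f ∘ g ∘ f⁻¹ = g⁻¹`, then every fixed point of `f` is a fixed point of `g`. -/
theorem stmt_2 (f g : ℝ ≃o ℝ)
    (hrel : ∀ x : ℝ, f (g (f.symm x)) = g.symm x) :
    {x : ℝ | f x = x} ⊆ {x : ℝ | g x = x} := by
  intro x hx
  simp only [Set.mem_setOf_eq] at hx ⊢
  have hsymm : f.symm x = x := by
    conv_lhs => rw [← hx]
    exact f.symm_apply_apply x
  have key : f (g x) = g.symm x := by
    have := hrel x
    rwa [hsymm] at this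
  rcases lt_trichotomy (g x) x with h | h | h
  · -- g x < x ⇒ f (g x) < f x = x, so g.symm x < x, so x = g (g.symm x) < g x
    exfalso
    have h1 : f (g x) < x := lt_of_lt_of_eq (f.strictMono h) hx
    rw [key] at h1
    have h2 : g (g.symm x) < g x := g.strictMono h1
    rw [g.apply_symm_apply] at h2
    exact absurd h (not_lt_of_gt h2)
  · exact h
  · exfalso
    have h1 : x < f (g x) := lt_of_eq_of_lt hx.symm (f.strictMono h)
    rw [key] at h1
    have h2 : g x < g (g.symm x) := g.strictMono h1
    rw [g.apply_symm_apply] at h2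
    exact absurd h (not_lt_of_gt h2)
end

section
/- Let g₁, …, gₙ be pairwise commuting orientation-preserving homeomorphisms of ℝ, each of which has a fixed point. Then g₁, …, gₙ have a common fixed point. -/
/-- Key lemma: if `F` is a nonempty closed set invariant under an order iso `g` (both ways)
and `g` has a fixed point somewhere, then `g` has a fixed point in `F`. -/
lemma key_fix (F : Set ℝ) (hne : F.Nonempty) (hcl : IsClosed F) (g : ℝ ≃o ℝ)
    (hg : ∀ x ∈ F, g x ∈ F) (hg' : ∀ x ∈ F, g.symm x ∈ F)
    (y : ℝ) (hy : g y = y) : ∃ c ∈ F, g c = c := by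
  by_cases h : ∃ x ∈ F, x ≤ y
  · set S : Set ℝ := F ∩ Set.Iic y with hS
    have hSne : S.Nonempty := by obtain ⟨x, hx, hxy⟩ := h; exact ⟨x, hx, hxy⟩
    have hScl : IsClosed S := hcl.inter isClosed_Iic
    have hSbdd : BddAbove S := ⟨y, fun x hx => hx.2⟩
    have hc : sSup S ∈ S := hScl.csSup_mem hSne hSbdd
    set c := sSup S
    have hgc : g c ∈ S := by
      refine ⟨hg c hc.1, ?_⟩
      have : g c ≤ g y := g.monotone hc.2
      simpa [hy] using this
    have hgc' : g.symm c ∈ S := by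
      refine ⟨hg' c hc.1, ?_⟩
      have : g.symm c ≤ g.symm y := g.symm.monotone hc.2
      have hy' : g.symm y = y := by
        have := congrArg g.symm hy; simpa using this.symm
      simpa [hy'] using this
    have h1 : g c ≤ c := le_csSup hSbdd hgc
    have h2 : g.symm c ≤ c := le_csSup hSbdd hgc'
    have h3 : c ≤ g c := by
      have := g.monotone h2; simpa using this
    exact ⟨c, hc.1, le_antisymm h1 h3⟩
  · push_neg at h
    have hbdd : BddBelow F := ⟨y, fun x hx => (h x hx).le⟩
    have hc : sInf F ∈ F := hcl.csInf_mem hne hbdd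
    set c := sInf F
    have h1 : c ≤ g c := csInf_le hbdd (hg c hc)
    have h2 : c ≤ g.symm c := csInf_le hbdd (hg' c hc)
    have h3 : g c ≤ c := by
      have := g.monotone h2; simpa using this
    exact ⟨c, hc, le_antisymm h3 h1⟩

/-- If `g 1, …, g n` are pairwise commuting orientation-preserving homeomorphisms of ℝ,
each having a fixed point, then they have a common fixed point. -/
theorem stmt_4 (n : ℕ) (g : Fin n → (ℝ ≃o ℝ))
    (hcomm : ∀ i j : Fin n, ∀ x : ℝ, g i (g j x) = g j (g i x))
    (hfix : ∀ i : Fin n, ∃ x : ℝ, g i x = x) :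
    ∃ x : ℝ, ∀ i : Fin n, g i x = x := by
  induction n with
  | zero => exact ⟨0, fun i => i.elim0⟩
  | succ n ih =>
    obtain ⟨x0, hx0⟩ := ih (fun i => g i.castSucc)
      (fun i j x => hcomm i.castSucc j.castSucc x)
      (fun i => hfix i.castSucc)
    set F : Set ℝ := {x | ∀ i : Fin n, g i.castSucc x = x} with hF
    have hne : F.Nonempty := ⟨x0, hx0⟩
    have hcl : IsClosed F := by
      have : F = ⋂ i : Fin n, {x | g i.castSucc x = x} := by
        ext x; simp [hF, Set.mem_iInter]
      rw [this]
      exact isClosed_iInter fun i =>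
        isClosed_eq ((g i.castSucc).toHomeomorph.continuous) continuous_id
    obtain ⟨y, hy⟩ := hfix (Fin.last n)
    obtain ⟨c, hcF, hcfix⟩ := key_fix F hne hcl (g (Fin.last n))
      (fun x hx i => by rw [hcomm i.castSucc (Fin.last n) x, hx i])
      (fun x hx i => by
        have := hcomm (Fin.last n) i.castSucc ((g (Fin.last n)).symm x)
        have h2 : g i.castSucc ((g (Fin.last n)).symm x)
            = (g (Fin.last n)).symm (g i.castSucc x) := by
          apply (g (Fin.last n)).injective
          simp only [OrderIso.apply_symm_apply]
          rw [this]; simp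
        rw [h2, hx i]) y hy
    refine ⟨c, fun i => ?_⟩
    rcases Fin.lastCases (motive := fun i => g i c = c) hcfix (fun i => hcF i) i with h
    exact h
end

section
/- With γ₀ and δ₀ as in the construction (γ₀ the 1-periodic piecewise-linear function equal to -4x+1 on [0,1/2) and 4x-3 on [1/2,1); δ₀² the piecewise-linear homeomorphism commuting with x ↦ x+1 given by δ₀²(x) = x/4 on [0,4/12), x - 1/4 on [4/12,5/12), 4x - 3/2 on [5/12,1/2), and δ₀²(x+1/2) = δ₀⁻²(x)+1/2), the function φ(x) = Σ_{k=0}^{11} γ₀(δ₀²(x - k/12)) is constant equal to 7 on ℝ. -/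
/-!
Since `γ₀ ∘ δ₂` is 1-periodic, the sum `φ` is `1/12`-periodic, so it suffices to evaluate it
at `u ∈ [11/12, 1)`, where all twelve arguments `u - k/12` lie in `[0, 1)`. There `γ₀ ∘ δ₂` is
piecewise linear with slopes `-1, -4, -16, 16, 4, 1`; on `[1/2, 1)` it is computed from
`δ₂ (δ₂ a + 1/2) = a + 1/2`. The twelve arguments fall `4, 1, 1, 1, 1, 4` into the six pieces,
so the slopes of the summands cancel and their constant terms add up to `7`.
-/

open Set Finset Function

theorem Function.Periodic.sum_range_sub_div {M : Type*} [AddCommMonoid M] {f : ℝ → M}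
    (hf : Periodic f 1) (n : ℕ) :
    Periodic (fun x => ∑ k ∈ range n, f (x - k / n)) (1 / n) := by
  intro x
  rcases n with _ | m
  · simp
  have hlast : f (x + 1 / (m + 1 : ℕ)) = f (x - m / (m + 1 : ℕ)) := by
    rw [← hf (x - _)]; congr 1; push_cast; field_simp; ring
  beta_reduce
  rw [sum_range_succ', sum_range_succ, ← hlast]
  congr 1
  · refine sum_congr rfl fun k _ => congrArg f ?_
    push_cast; field_simp; ring
  · simp

theorem OrderIso.apply_apply_add_eq {α : Type*} [Preorder α] [Add α] (e : α ≃o α) {c : α}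
    (he : ∀ x, e (x + c) = e.symm x + c) (a : α) : e (e a + c) = a + c := by
  rw [he, e.symm_apply_apply]

section

variable (γ₀ : ℝ → ℝ) (δ₂ : ℝ ≃o ℝ)

theorem comp_eq_one_sub (hγ1 : ∀ x ∈ Ico (0 : ℝ) (1/2), γ₀ x = -4 * x + 1)
    (hd1 : ∀ x ∈ Ico (0 : ℝ) (4/12), δ₂ x = x / 4) (u : ℝ) (hu : u ∈ Ico (0 : ℝ) (4/12)) :
    γ₀ (δ₂ u) = 1 - u := by
  obtain ⟨h₀, h₁⟩ := hu
  rw [hd1 u ⟨h₀, h₁⟩, hγ1 _ ⟨by linarith, by linarith⟩]; ring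

theorem comp_eq_two_sub_four_mul (hγ1 : ∀ x ∈ Ico (0 : ℝ) (1/2), γ₀ x = -4 * x + 1)
    (hd2 : ∀ x ∈ Ico (4/12 : ℝ) (5/12), δ₂ x = x - 1/4) (u : ℝ)
    (hu : u ∈ Ico (4/12 : ℝ) (5/12)) :
    γ₀ (δ₂ u) = 2 - 4 * u := by
  obtain ⟨h₀, h₁⟩ := hu
  rw [hd2 u ⟨h₀, h₁⟩, hγ1 _ ⟨by linarith, by linarith⟩]; ring

theorem comp_eq_seven_sub_sixteen_mul (hγ1 : ∀ x ∈ Ico (0 : ℝ) (1/2), γ₀ x = -4 * x + 1)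
    (hd3 : ∀ x ∈ Ico (5/12 : ℝ) (1/2), δ₂ x = 4 * x - 3/2) (u : ℝ)
    (hu : u ∈ Ico (5/12 : ℝ) (1/2)) :
    γ₀ (δ₂ u) = 7 - 16 * u := by
  obtain ⟨h₀, h₁⟩ := hu
  rw [hd3 u ⟨h₀, h₁⟩, hγ1 _ ⟨by linarith, by linarith⟩]; ring

theorem comp_eq_sixteen_mul_sub_nine (hγ2 : ∀ x ∈ Ico (1/2 : ℝ) 1, γ₀ x = 4 * x - 3)
    (hd1 : ∀ x ∈ Ico (0 : ℝ) (4/12), δ₂ x = x / 4)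
    (hdhalf : ∀ x : ℝ, δ₂ (x + 1/2) = δ₂.symm x + 1/2) (u : ℝ)
    (hu : u ∈ Ico (1/2 : ℝ) (7/12)) :
    γ₀ (δ₂ u) = 16 * u - 9 := by
  obtain ⟨h₀, h₁⟩ := hu
  have hδ := δ₂.apply_apply_add_eq hdhalf (4 * u - 2)
  rw [hd1 (4 * u - 2) ⟨by linarith, by linarith⟩, show (4 * u - 2) / 4 + 1/2 = u by ring] at hδ
  rw [hδ, hγ2 _ ⟨by linarith, by linarith⟩]; ring

theorem comp_eq_four_mul_sub_two (hγ2 : ∀ x ∈ Ico (1/2 : ℝ) 1, γ₀ x = 4 * x - 3)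
    (hd2 : ∀ x ∈ Ico (4/12 : ℝ) (5/12), δ₂ x = x - 1/4)
    (hdhalf : ∀ x : ℝ, δ₂ (x + 1/2) = δ₂.symm x + 1/2) (u : ℝ)
    (hu : u ∈ Ico (7/12 : ℝ) (8/12)) :
    γ₀ (δ₂ u) = 4 * u - 2 := by
  obtain ⟨h₀, h₁⟩ := hu
  have hδ := δ₂.apply_apply_add_eq hdhalf (u - 1/4)
  rw [hd2 (u - 1/4) ⟨by linarith, by linarith⟩, show u - 1/4 - 1/4 + 1/2 = u by ring] at hδ
  rw [hδ, hγ2 _ ⟨by linarith, by linarith⟩]; ring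

theorem comp_eq_self (hγ2 : ∀ x ∈ Ico (1/2 : ℝ) 1, γ₀ x = 4 * x - 3)
    (hd3 : ∀ x ∈ Ico (5/12 : ℝ) (1/2), δ₂ x = 4 * x - 3/2)
    (hdhalf : ∀ x : ℝ, δ₂ (x + 1/2) = δ₂.symm x + 1/2) (u : ℝ)
    (hu : u ∈ Ico (8/12 : ℝ) 1) :
    γ₀ (δ₂ u) = u := by
  obtain ⟨h₀, h₁⟩ := hu
  have hδ := δ₂.apply_apply_add_eq hdhalf (u / 4 + 1/4)
  rw [hd3 (u / 4 + 1/4) ⟨by linarith, by linarith⟩,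
    show 4 * (u / 4 + 1/4) - 3/2 + 1/2 = u by ring] at hδ
  rw [hδ, hγ2 _ ⟨by linarith, by linarith⟩]; ring

end

theorem sum_range_twelve_eq_seven {f : ℝ → ℝ}
    (h₁ : ∀ u ∈ Ico (0 : ℝ) (4/12), f u = 1 - u)
    (h₂ : ∀ u ∈ Ico (4/12 : ℝ) (5/12), f u = 2 - 4 * u)
    (h₃ : ∀ u ∈ Ico (5/12 : ℝ) (1/2), f u = 7 - 16 * u)
    (h₄ : ∀ u ∈ Ico (1/2 : ℝ) (7/12), f u = 16 * u - 9)
    (h₅ : ∀ u ∈ Ico (7/12 : ℝ) (8/12), f u = 4 * u - 2)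
    (h₆ : ∀ u ∈ Ico (8/12 : ℝ) 1, f u = u)
    {u : ℝ} (hu : u ∈ Ico (11/12 : ℝ) 1) :
    ∑ k ∈ range 12, f (u - k / 12) = 7 := by
  obtain ⟨h₀, h₁₂⟩ := hu
  simp only [sum_range_succ, sum_range_zero, Nat.cast_zero, Nat.cast_one, Nat.cast_ofNat]
  rw [h₆ (u - 0/12), h₆ (u - 1/12), h₆ (u - 2/12), h₆ (u - 3/12), h₅ (u - 4/12), h₄ (u - 5/12),
    h₃ (u - 6/12), h₂ (u - 7/12), h₁ (u - 8/12), h₁ (u - 9/12), h₁ (u - 10/12), h₁ (u - 11/12)]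
  · ring
  all_goals constructor <;> linarith

open Set Finset in
/-- With `γ₀` the 1-periodic piecewise-linear function and `δ₂ = δ₀²` the
piecewise-linear homeomorphism of the construction, the function
`φ(x) = ∑_{k=0}^{11} γ₀ (δ₀² (x - k/12))` is constant equal to `7`. -/
theorem stmt_7 (γ₀ : ℝ → ℝ)
    (hγper : ∀ x : ℝ, γ₀ (x + 1) = γ₀ x)
    (hγ1 : ∀ x ∈ Ico (0 : ℝ) (1/2), γ₀ x = -4 * x + 1)
    (hγ2 : ∀ x ∈ Ico (1/2 : ℝ) 1, γ₀ x = 4 * x - 3)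
    (δ₂ : ℝ ≃o ℝ)
    (hd1 : ∀ x ∈ Ico (0 : ℝ) (4/12), δ₂ x = x / 4)
    (hd2 : ∀ x ∈ Ico (4/12 : ℝ) (5/12), δ₂ x = x - 1/4)
    (hd3 : ∀ x ∈ Ico (5/12 : ℝ) (1/2), δ₂ x = 4 * x - 3/2)
    (hdhalf : ∀ x : ℝ, δ₂ (x + 1/2) = δ₂.symm x + 1/2)
    (hdper : ∀ x : ℝ, δ₂ (x + 1) = δ₂ x + 1) :
    ∀ x : ℝ, ∑ k ∈ Finset.range 12, γ₀ (δ₂ (x - k / 12)) = 7 := by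
  have hper : Periodic (γ₀ ∘ δ₂) 1 := fun x => by simp only [comp_apply, hdper, hγper]
  have hsum : Periodic (fun x => ∑ k ∈ range 12, γ₀ (δ₂ (x - k / 12))) (1 / 12) := by
    exact_mod_cast hper.sum_range_sub_div 12
  intro x
  obtain ⟨u, hu, hxu⟩ := hsum.exists_mem_Ico (by norm_num) x (11/12)
  rw [hxu]
  exact sum_range_twelve_eq_seven (f := γ₀ ∘ δ₂) (comp_eq_one_sub γ₀ δ₂ hγ1 hd1)
    (comp_eq_two_sub_four_mul γ₀ δ₂ hγ1 hd2) (comp_eq_seven_sub_sixteen_mul γ₀ δ₂ hγ1 hd3)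
    (comp_eq_sixteen_mul_sub_nine γ₀ δ₂ hγ2 hd1 hdhalf)
    (comp_eq_four_mul_sub_two γ₀ δ₂ hγ2 hd2 hdhalf) (comp_eq_self γ₀ δ₂ hγ2 hd3 hdhalf)
    (by rwa [show (11/12 : ℝ) + 1/12 = 1 by norm_num] at hu)
end

section
/- With g_k as in the construction (g_k(x,y) = (x, y + (1/168)·γ₀(δ₀²(x - k/12)))), the composition g₀ ∘ g₁ ∘ ⋯ ∘ g₁₁ equals the translation b^{1/24}(x,y) = (x, y + 1/24), and consequently g₀² ∘ g₁² ∘ ⋯ ∘ g₁₁² = (x, y + 1/12). -/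
open Set in
/-- With `g_k (x,y) = (x, y + (1/168) · γ₀ (δ₀² (x - k/12)))` as in the construction,
the composition `g₀ ∘ g₁ ∘ ⋯ ∘ g₁₁` is the translation `(x, y) ↦ (x, y + 1/24)`, and
`g₀² ∘ g₁² ∘ ⋯ ∘ g₁₁²` is `(x, y) ↦ (x, y + 1/12)`. -/
theorem stmt_11 (γ₀ : ℝ → ℝ)
    (hγper : ∀ x : ℝ, γ₀ (x + 1) = γ₀ x)
    (hγ1 : ∀ x ∈ Ico (0 : ℝ) (1/2), γ₀ x = -4 * x + 1)
    (hγ2 : ∀ x ∈ Ico (1/2 : ℝ) 1, γ₀ x = 4 * x - 3)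
    (δ₂ : ℝ ≃o ℝ)
    (hd1 : ∀ x ∈ Ico (0 : ℝ) (4/12), δ₂ x = x / 4)
    (hd2 : ∀ x ∈ Ico (4/12 : ℝ) (5/12), δ₂ x = x - 1/4)
    (hd3 : ∀ x ∈ Ico (5/12 : ℝ) (1/2), δ₂ x = 4 * x - 3/2)
    (hdhalf : ∀ x : ℝ, δ₂ (x + 1/2) = δ₂.symm x + 1/2)
    (hdper : ∀ x : ℝ, δ₂ (x + 1) = δ₂ x + 1)
    (gk : ℤ → ℝ × ℝ → ℝ × ℝ)
    (hgk : ∀ (k : ℤ) (p : ℝ × ℝ),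
      gk k p = (p.1, p.2 + (1/168) * γ₀ (δ₂ (p.1 - (k : ℝ) / 12)))) :
    (gk 0 ∘ gk 1 ∘ gk 2 ∘ gk 3 ∘ gk 4 ∘ gk 5 ∘ gk 6 ∘ gk 7 ∘ gk 8 ∘ gk 9 ∘ gk 10 ∘ gk 11)
        = (fun p : ℝ × ℝ => (p.1, p.2 + 1/24)) ∧
    ((gk 0 ∘ gk 0) ∘ (gk 1 ∘ gk 1) ∘ (gk 2 ∘ gk 2) ∘ (gk 3 ∘ gk 3) ∘ (gk 4 ∘ gk 4) ∘
        (gk 5 ∘ gk 5) ∘ (gk 6 ∘ gk 6) ∘ (gk 7 ∘ gk 7) ∘ (gk 8 ∘ gk 8) ∘ (gk 9 ∘ gk 9) ∘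
        (gk 10 ∘ gk 10) ∘ (gk 11 ∘ gk 11))
        = (fun p : ℝ × ℝ => (p.1, p.2 + 1/12)) := by
  -- inverse of δ₂ on pieces
  have hsymm1 : ∀ y ∈ Ico (0:ℝ) (1/12), δ₂.symm y = 4 * y := by
    intro y hy
    rw [OrderIso.symm_apply_eq, hd1 (4*y) ⟨by linarith [hy.1], by linarith [hy.2]⟩]
    ring
  have hsymm2 : ∀ y ∈ Ico (1/12:ℝ) (1/6), δ₂.symm y = y + 1/4 := by
    intro y hy
    rw [OrderIso.symm_apply_eq, hd2 (y+1/4) ⟨by linarith [hy.1], by linarith [hy.2]⟩]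
    ring
  have hsymm3 : ∀ y ∈ Ico (1/6:ℝ) (1/2), δ₂.symm y = y/4 + 3/8 := by
    intro y hy
    rw [OrderIso.symm_apply_eq, hd3 (y/4+3/8) ⟨by linarith [hy.1], by linarith [hy.2]⟩]
    ring
  set F : ℝ → ℝ := fun u => γ₀ (δ₂ u) with hF
  have hFper : Function.Periodic F 1 := by
    intro u
    simp only [hF]
    rw [hdper, hγper]
  -- values of F on the pieces of one period
  have hFa : ∀ u ∈ Ico (0:ℝ) (4/12), F u = -u + 1 := by
    intro u hu
    simp only [hF]
    rw [hd1 u hu, hγ1 (u/4) ⟨by linarith [hu.1], by linarith [hu.2]⟩]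
    ring
  have hFb : ∀ u ∈ Ico (4/12:ℝ) (5/12), F u = -4*u + 2 := by
    intro u hu
    simp only [hF]
    rw [hd2 u hu, hγ1 (u - 1/4) ⟨by linarith [hu.1], by linarith [hu.2]⟩]
    ring
  have hFc : ∀ u ∈ Ico (5/12:ℝ) (1/2), F u = -16*u + 7 := by
    intro u hu
    simp only [hF]
    rw [hd3 u hu, hγ1 (4*u - 3/2) ⟨by linarith [hu.1], by linarith [hu.2]⟩]
    ring
  have hFd : ∀ u ∈ Ico (1/2:ℝ) (7/12), F u = 16*u - 9 := by
    intro u hu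
    have h := hdhalf (u - 1/2)
    rw [show u - 1/2 + 1/2 = u by ring] at h
    simp only [hF]
    rw [h, hsymm1 (u - 1/2) ⟨by linarith [hu.1], by linarith [hu.2]⟩,
      hγ2 (4*(u-1/2) + 1/2) ⟨by linarith [hu.1], by linarith [hu.2]⟩]
    ring
  have hFe : ∀ u ∈ Ico (7/12:ℝ) (8/12), F u = 4*u - 2 := by
    intro u hu
    have h := hdhalf (u - 1/2)
    rw [show u - 1/2 + 1/2 = u by ring] at h
    simp only [hF]
    rw [h, hsymm2 (u - 1/2) ⟨by linarith [hu.1], by linarith [hu.2]⟩,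
      hγ2 (u - 1/2 + 1/4 + 1/2) ⟨by linarith [hu.1], by linarith [hu.2]⟩]
    ring
  have hFf : ∀ u ∈ Ico (8/12:ℝ) 1, F u = u := by
    intro u hu
    have h := hdhalf (u - 1/2)
    rw [show u - 1/2 + 1/2 = u by ring] at h
    simp only [hF]
    rw [h, hsymm3 (u - 1/2) ⟨by linarith [hu.1], by linarith [hu.2]⟩,
      hγ2 ((u - 1/2)/4 + 3/8 + 1/2) ⟨by linarith [hu.1], by linarith [hu.2]⟩]
    ring
  set S : ℝ → ℝ := fun x => F x + F (x - 1/12) + F (x - 2/12) + F (x - 3/12) + F (x - 4/12)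
    + F (x - 5/12) + F (x - 6/12) + F (x - 7/12) + F (x - 8/12) + F (x - 9/12)
    + F (x - 10/12) + F (x - 11/12) with hS
  have hSper : Function.Periodic S (1/12) := by
    intro x
    simp only [hS]
    have h : F (x + 1/12) = F (x - 11/12) := by
      have := hFper (x - 11/12)
      rw [show x - 11/12 + 1 = x + 1/12 by ring] at this
      exact this
    rw [show x + 1/12 - 1/12 = x by ring, show x + 1/12 - 2/12 = x - 1/12 by ring,
      show x + 1/12 - 3/12 = x - 2/12 by ring, show x + 1/12 - 4/12 = x - 3/12 by ring,
      show x + 1/12 - 5/12 = x - 4/12 by ring, show x + 1/12 - 6/12 = x - 5/12 by ring,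
      show x + 1/12 - 7/12 = x - 6/12 by ring, show x + 1/12 - 8/12 = x - 7/12 by ring,
      show x + 1/12 - 9/12 = x - 8/12 by ring, show x + 1/12 - 10/12 = x - 9/12 by ring,
      show x + 1/12 - 11/12 = x - 10/12 by ring, h]
    ring
  have base : ∀ y ∈ Ico (0:ℝ) (1/12), S y = 7 := by
    intro y hy
    obtain ⟨hy0, hy1⟩ := hy
    have shift : ∀ k j : ℝ, k + j = 12 → F (y - k/12) = F (y + j/12) := by
      intro k j hkj
      have := hFper (y - k/12)
      rw [show y - k/12 + 1 = y + j/12 by linarith] at this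
      exact this.symm
    simp only [hS]
    rw [shift 1 11 (by norm_num), shift 2 10 (by norm_num), shift 3 9 (by norm_num),
      shift 4 8 (by norm_num), shift 5 7 (by norm_num), shift 6 6 (by norm_num),
      shift 7 5 (by norm_num), shift 8 4 (by norm_num), shift 9 3 (by norm_num),
      shift 10 2 (by norm_num), shift 11 1 (by norm_num)]
    rw [hFa y ⟨by linarith, by linarith⟩,
      hFa (y + 1/12) ⟨by linarith, by linarith⟩,
      hFa (y + 2/12) ⟨by linarith, by linarith⟩,
      hFa (y + 3/12) ⟨by linarith, by linarith⟩,
      hFb (y + 4/12) ⟨by linarith, by linarith⟩,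
      hFc (y + 5/12) ⟨by linarith, by linarith⟩,
      hFd (y + 6/12) ⟨by linarith, by linarith⟩,
      hFe (y + 7/12) ⟨by linarith, by linarith⟩,
      hFf (y + 8/12) ⟨by linarith, by linarith⟩,
      hFf (y + 9/12) ⟨by linarith, by linarith⟩,
      hFf (y + 10/12) ⟨by linarith, by linarith⟩,
      hFf (y + 11/12) ⟨by linarith, by linarith⟩]
    ring
  have key : ∀ x : ℝ, S x = 7 := by
    intro x
    obtain ⟨y, hy, hxy⟩ := hSper.exists_mem_Ico₀ (by norm_num) x
    rw [hxy, base y hy]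
  constructor
  · funext p
    simp only [Function.comp_apply, hgk]
    have := key p.1
    simp only [hS, hF] at this
    rw [Prod.mk.injEq]
    refine ⟨rfl, ?_⟩
    push_cast
    ring_nf
    ring_nf at this
    linarith
  · funext p
    simp only [Function.comp_apply, hgk]
    have := key p.1
    simp only [hS, hF] at this
    rw [Prod.mk.injEq]
    refine ⟨rfl, ?_⟩
    push_cast
    ring_nf
    ring_nf at this
    linarith
end

section
/- Let f, g be commuting orientation-preserving homeomorphisms of the circle, each having a fixed point. Then f and g have a common fixed point. -/
open Filter Topology

/-- Two commuting orientation-preserving circle homeomorphisms (given by continuous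
lifts, commuting up to an integer translation), each having a fixed point on the
circle, have a common fixed point on the circle. -/
theorem stmt_14 (f g : CircleDeg1Liftˣ)
    (hfc : Continuous (f : CircleDeg1Lift)) (hgc : Continuous (g : CircleDeg1Lift))
    (hcomm : ∃ m : ℤ, ∀ x : ℝ,
      (f : CircleDeg1Lift) ((g : CircleDeg1Lift) x) =
        (g : CircleDeg1Lift) ((f : CircleDeg1Lift) x) + m)
    (hf : ∃ x : ℝ, ∃ m : ℤ, (f : CircleDeg1Lift) x = x + m)
    (hg : ∃ x : ℝ, ∃ m : ℤ, (g : CircleDeg1Lift) x = x + m) :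
    ∃ x : ℝ, (∃ m : ℤ, (f : CircleDeg1Lift) x = x + m) ∧
      (∃ m : ℤ, (g : CircleDeg1Lift) x = x + m) := by
  set F : CircleDeg1Lift := (f : CircleDeg1Lift) with hF
  set G : CircleDeg1Lift := (g : CircleDeg1Lift) with hG
  obtain ⟨m₀, hm₀⟩ := hcomm
  obtain ⟨x₀, mf, hx₀⟩ := hf
  obtain ⟨z, k, hz⟩ := hg
  -- translation number of f is mf
  have hτ1 : CircleDeg1Lift.translationNumber F = mf :=
    F.translationNumber_of_eq_add_int hx₀
  -- also, F (G x₀) = G x₀ + (mf + m₀)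
  have hfix2 : F (G x₀) = G x₀ + ((mf + m₀ : ℤ) : ℝ) := by
    have : F (G x₀) = G (F x₀) + m₀ := hm₀ x₀
    rw [hx₀, G.map_add_int] at this
    rw [this]; push_cast; ring
  have hτ2 : CircleDeg1Lift.translationNumber F = ((mf + m₀ : ℤ) : ℝ) :=
    F.translationNumber_of_eq_add_int hfix2
  have hm₀0 : m₀ = 0 := by
    have h : (mf : ℝ) = ((mf + m₀ : ℤ) : ℝ) := hτ1 ▸ hτ2
    push_cast at h
    have : (m₀ : ℝ) = 0 := by linarith
    exact_mod_cast this
  subst hm₀0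
  -- exact commutation
  have hcomm' : ∀ x, F (G x) = G (F x) := by
    intro x; have := hm₀ x; simpa using this
  -- the map H y = G y - k
  set H : ℝ → ℝ := fun y => G y - k with hH
  have hHcont : Continuous H := hgc.sub continuous_const
  have hHmono : Monotone H := fun a b hab => by
    simp only [hH]; exact sub_le_sub_right (G.mono hab) _
  have hHz : H z = z := by simp [hH, hz]
  have hHint : ∀ (j : ℤ), H (z + j) = z + j := by
    intro j; simp [hH, G.map_add_int, hz]; ring
  -- the fixed set of f
  set A : Set ℝ := {y | F y = y + (mf : ℝ)} with hA
  have hAclosed : IsClosed A :=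
    isClosed_eq hfc (continuous_id.add continuous_const)
  have hx₀A : x₀ ∈ A := hx₀
  have hHA : ∀ y ∈ A, H y ∈ A := by
    intro y hy
    have h1 : F (H y) = F (G y) + ((-k : ℤ) : ℝ) := by
      have := F.map_add_int (G y) (-k)
      simpa [hH, sub_eq_add_neg] using this
    have h2 : F (G y) = G y + (mf : ℝ) := by
      rw [hcomm' y, hy, G.map_add_int]
    show F (H y) = H y + (mf : ℝ)
    rw [h1, h2]; push_cast; simp [hH]; ring
  -- the orbit of x₀ under H
  set u : ℕ → ℝ := fun n => H^[n] x₀ with hu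
  have huA : ∀ n, u n ∈ A := by
    intro n; induction n with
    | zero => simpa [hu] using hx₀A
    | succ n ih =>
      show H^[n + 1] x₀ ∈ A
      rw [Function.iterate_succ_apply']; exact hHA _ ih
  have huS : ∀ n, u (n + 1) = H (u n) := by
    intro n
    show H^[n + 1] x₀ = H (H^[n] x₀)
    rw [Function.iterate_succ_apply']
  -- bounds: pick integer M with z - M ≤ x₀ ≤ z + M
  obtain ⟨M, hM⟩ : ∃ M : ℤ, |x₀ - z| ≤ M := exists_int_ge _ |>.imp fun M h => h
  have hub : ∀ n, u n ≤ z + M := by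
    intro n; induction n with
    | zero =>
      simp only [hu, Function.iterate_zero, id]
      have := abs_le.1 hM; linarith [this.2]
    | succ n ih =>
      rw [huS]
      calc H (u n) ≤ H (z + M) := hHmono ih
        _ = z + M := hHint M
  have hlb : ∀ n, z + ((-M : ℤ) : ℝ) ≤ u n := by
    intro n; induction n with
    | zero =>
      simp only [hu, Function.iterate_zero, id]
      have := abs_le.1 hM; push_cast; linarith [this.1]
    | succ n ih =>
      rw [huS]
      calc z + ((-M : ℤ) : ℝ) = H (z + ((-M : ℤ) : ℝ)) := (hHint (-M)).symm
        _ ≤ H (u n) := hHmono ih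
  -- the orbit is monotone or antitone
  have key : ∀ (L : ℝ), Tendsto u atTop (𝓝 L) → ∃ x, (∃ m : ℤ, F x = x + m) ∧ ∃ m : ℤ, G x = x + m := by
    intro L hL
    have hLA : L ∈ A := hAclosed.mem_of_tendsto hL (Eventually.of_forall huA)
    have h1 : Tendsto (fun n => H (u n)) atTop (𝓝 (H L)) :=
      (hHcont.tendsto L).comp hL
    have h2 : Tendsto (fun n => u (n + 1)) atTop (𝓝 L) :=
      hL.comp (tendsto_add_atTop_nat 1)
    have hHL : H L = L := by
      apply tendsto_nhds_unique h1
      simpa only [← huS] using h2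
    refine ⟨L, ⟨mf, hLA⟩, ⟨k, ?_⟩⟩
    have : G L - k = L := hHL
    linarith [this]
  rcases le_total x₀ (H x₀) with hcase | hcase
  · -- increasing orbit
    have hmono : Monotone u := monotone_nat_of_le_succ fun n => by
      rw [huS]
      induction n with
      | zero => simpa [hu] using hcase
      | succ n ih => rw [huS]; exact hHmono ih
    have hbdd : BddAbove (Set.range u) := ⟨z + M, by rintro _ ⟨n, rfl⟩; exact hub n⟩
    exact key _ (tendsto_atTop_ciSup hmono hbdd)
  · -- decreasing orbit
    have hanti : Antitone u := antitone_nat_of_succ_le fun n => by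
      rw [huS]
      induction n with
      | zero => simpa [hu] using hcase
      | succ n ih => rw [huS]; exact hHmono ih
    have hbdd : BddBelow (Set.range u) := ⟨z + ((-M : ℤ) : ℝ), by rintro _ ⟨n, rfl⟩; exact hlb n⟩
    exact key _ (tendsto_atTop_ciInf hanti hbdd)
end

section
/- Let f, g be orientation-preserving homeomorphisms of the circle satisfying f ∘ g ∘ f⁻¹ = g⁻¹, and suppose f has a fixed point. Then Fix(f) ⊆ Fix(g²). -/
/-- If `f, g` are orientation-preserving circle homeomorphisms (given by continuous
lifts) with `f ∘ g ∘ f⁻¹ = g⁻¹` on the circle and `f` has a fixed point, then every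
fixed point of `f` on the circle is a fixed point of `g²`. -/
theorem stmt_15 (f g : CircleDeg1Liftˣ)
    (hfc : Continuous (f : CircleDeg1Lift)) (hgc : Continuous (g : CircleDeg1Lift))
    (hrel : ∃ m : ℤ, ∀ x : ℝ,
      ((f * g * f⁻¹ : CircleDeg1Liftˣ) : CircleDeg1Lift) x =
        ((g⁻¹ : CircleDeg1Liftˣ) : CircleDeg1Lift) x + m)
    (hf : ∃ x : ℝ, ∃ m : ℤ, (f : CircleDeg1Lift) x = x + m) :
    ∀ x : ℝ, (∃ m : ℤ, (f : CircleDeg1Lift) x = x + m) →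
      ∃ m : ℤ, ((g ^ 2 : CircleDeg1Liftˣ) : CircleDeg1Lift) x = x + m := by
  obtain ⟨m, hm⟩ := hrel
  rintro x ⟨k, hk⟩
  set F : CircleDeg1Lift := (f : CircleDeg1Lift) with hF
  set G : CircleDeg1Lift := (g : CircleDeg1Lift) with hG
  set Gi : CircleDeg1Lift := ((g⁻¹ : CircleDeg1Liftˣ) : CircleDeg1Lift) with hGi
  -- key conjugation relation at the level of points
  have key : ∀ y : ℝ, F (G y) = Gi (F y) + m := by
    intro y
    have h := hm (F y)
    simpa [CircleDeg1Lift.mul_apply, CircleDeg1Lift.units_inv_apply_apply g,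
      CircleDeg1Lift.units_inv_apply_apply f, F, G, Gi] using h
  -- value of f at g² x
  have key2 : F (G (G x)) = Gi (Gi x) + k + 2 * m := by
    have h1 : F (G (G x)) = Gi (F (G x)) + m := key (G x)
    have h2 : F (G x) = Gi (F x) + m := key x
    rw [h1, h2, hk]
    rw [Gi.map_add_int, Gi.map_add_int, Gi.map_add_int]
    push_cast
    ring
  -- show g² x = x + m by trichotomy
  have hGG : ∀ y : ℝ, Gi (G (G y)) = G y := by
    intro y; simpa [G, Gi] using CircleDeg1Lift.units_inv_apply_apply g (G y)
  have hGiGi : ∀ y : ℝ, Gi (Gi (G (G y))) = y := by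
    intro y
    rw [hGG y]
    simpa [G, Gi] using CircleDeg1Lift.units_inv_apply_apply g y
  have hmain : G (G x) = x + m := by
    rcases lt_trichotomy (G (G x)) (x + m) with h | h | h
    · -- then Gi (Gi (x + m)) > x
      exfalso
      have h3 : x < Gi (Gi x) + m := by
        by_contra hle
        push_neg at hle
        have : G (G (Gi (Gi x) + m)) ≤ G (G x) := G.mono (G.mono hle)
        rw [G.map_add_int, G.map_add_int] at this
        have h4 : G (G (Gi (Gi x))) = x := by
          have := hGiGi x
          -- Gi (Gi (G (G x))) = x, need G (G (Gi (Gi x))) = x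
          simpa [G, Gi] using CircleDeg1Lift.units_apply_inv_apply g
            (((g⁻¹ : CircleDeg1Liftˣ) : CircleDeg1Lift) x)
        rw [h4] at this
        exact absurd this (not_le.mpr h)
      have h5 : F (G (G x)) ≤ F (x + m) := F.mono h.le
      rw [F.map_add_int, hk, key2] at h5
      -- Gi (Gi x) + k + 2m ≤ x + k + m ⇒ Gi (Gi x) + m ≤ x, contra h3
      nlinarith [h3, h5]
    · exact h
    · exfalso
      have h3 : Gi (Gi x) + m < x := by
        by_contra hle
        push_neg at hle
        have : G (G x) ≤ G (G (Gi (Gi x) + m)) := G.mono (G.mono hle)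
        rw [G.map_add_int, G.map_add_int] at this
        have h4 : G (G (Gi (Gi x))) = x := by
          simpa [G, Gi] using CircleDeg1Lift.units_apply_inv_apply g
            (((g⁻¹ : CircleDeg1Liftˣ) : CircleDeg1Lift) x)
        rw [h4] at this
        exact absurd this (not_le.mpr h)
      have h5 : F (x + m) ≤ F (G (G x)) := F.mono h.le
      rw [F.map_add_int, hk, key2] at h5
      nlinarith [h3, h5]
  refine ⟨m, ?_⟩
  simpa [sq, CircleDeg1Lift.mul_apply, G] using hmain
end

section
/- Let f, g be orientation-preserving homeomorphisms of ℝ with f g f⁻¹ = g⁻¹, no common fixed point, and Fix(g) ≠ ∅. Then f has no fixed point, and for every x ∈ Fix(g), f(x) ∈ Fix(g); consequently g restricts to a homeomorphism of the interval between x and f(x). -/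
/-- If `f, g` are orientation-preserving homeomorphisms of ℝ with `f g f⁻¹ = g⁻¹`, no
common fixed point, and `Fix g ≠ ∅`, then `f` has no fixed point, `Fix g` is
`f`-invariant, and for `x ∈ Fix g` the map `g` restricts to a homeomorphism of the
interval between `x` and `f x`. -/
theorem stmt_16 (f g : ℝ ≃o ℝ)
    (hrel : ∀ x : ℝ, f (g (f.symm x)) = g.symm x)
    (hnc : ¬ ∃ x : ℝ, f x = x ∧ g x = x)
    (hg : ∃ x : ℝ, g x = x) :
    (∀ x : ℝ, f x ≠ x) ∧
    (∀ x : ℝ, g x = x → g (f x) = f x) ∧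
    (∀ x : ℝ, g x = x → g '' Set.uIcc x (f x) = Set.uIcc x (f x)) := by
  -- forward invariance of Fix g
  have hinv : ∀ x : ℝ, g x = x → g (f x) = f x := by
    intro x hx
    have h := hrel (f x)
    rw [f.symm_apply_apply, hx] at h
    -- h : f x = g.symm (f x)
    conv_lhs => rw [h]
    exact g.apply_symm_apply _
  -- backward invariance of Fix g
  have hinv' : ∀ x : ℝ, g x = x → g (f.symm x) = f.symm x := by
    intro x hx
    have hgs : g.symm x = x := by
      conv_lhs => rw [← hx]
      exact g.symm_apply_apply x
    have h := hrel x
    rw [hgs] at h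
    have h2 : f (g (f.symm x)) = f (f.symm x) := by rw [h, f.apply_symm_apply]
    exact f.injective h2
  -- f has no fixed point
  have hf : ∀ x : ℝ, f x ≠ x := by
    intro x hfx
    obtain ⟨y, hy⟩ := hg
    have hyx : y ≠ x := fun h => hnc ⟨x, hfx, h ▸ hy⟩
    rcases lt_or_gt_of_ne hyx with hlt | hgt
    · -- y < x : take sup of fixed points below x
      set S : Set ℝ := {t | g t = t ∧ t ≤ x} with hS
      have hne : S.Nonempty := ⟨y, hy, hlt.le⟩
      have hbdd : BddAbove S := ⟨x, fun t ht => ht.2⟩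
      set z := sSup S with hz
      have hgimg : g '' S = S := by
        ext t
        constructor
        · rintro ⟨s, hs, rfl⟩
          rw [hs.1]; exact hs
        · intro ht
          exact ⟨t, ht, ht.1⟩
      have hgz : g z = z := by
        rw [hz, g.map_csSup' hne hbdd, hgimg]
      have hzx : z ≤ x := csSup_le hne fun t ht => ht.2
      have hzltx : z < x := lt_of_le_of_ne hzx (fun h => hnc ⟨x, hfx, h ▸ hgz⟩)
      have hfz_le : f z ≤ z := by
        apply le_csSup hbdd
        refine ⟨hinv z hgz, ?_⟩
        have hlt2 : f z < x := lt_of_lt_of_eq (f.strictMono hzltx) hfx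
        exact hlt2.le
      have hfz_ge : z ≤ f z := by
        have hmem : f.symm z ∈ S := by
          refine ⟨hinv' z hgz, ?_⟩
          have : f.symm z < f.symm (f x) := f.symm.strictMono (show z < f x by rw [hfx]; exact hzltx)
          rw [f.symm_apply_apply] at this
          exact this.le
        have := le_csSup hbdd hmem
        calc z = f (f.symm z) := (f.apply_symm_apply z).symm
        _ ≤ f z := f.monotone this
      exact hnc ⟨z, le_antisymm hfz_le hfz_ge, hgz⟩
    · -- y > x : take inf of fixed points above x
      set S : Set ℝ := {t | g t = t ∧ x ≤ t} with hS
      have hne : S.Nonempty := ⟨y, hy, hgt.le⟩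
      have hbdd : BddBelow S := ⟨x, fun t ht => ht.2⟩
      set z := sInf S with hz
      have hgimg : g '' S = S := by
        ext t
        constructor
        · rintro ⟨s, hs, rfl⟩
          rw [hs.1]; exact hs
        · intro ht
          exact ⟨t, ht, ht.1⟩
      have hgz : g z = z := by
        rw [hz, g.map_csInf' hne hbdd, hgimg]
      have hzx : x ≤ z := le_csInf hne fun t ht => ht.2
      have hzltx : x < z := lt_of_le_of_ne hzx (fun h => hnc ⟨x, hfx, h ▸ hgz⟩)
      have hfz_ge : z ≤ f z := by
        apply csInf_le hbdd
        refine ⟨hinv z hgz, ?_⟩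
        calc x = f x := hfx.symm
        _ ≤ f z := f.monotone hzltx.le
      have hfz_le : f z ≤ z := by
        have hmem : f.symm z ∈ S := by
          refine ⟨hinv' z hgz, ?_⟩
          have : f.symm (f x) < f.symm z := f.symm.strictMono (show f x < z by rw [hfx]; exact hzltx)
          rw [f.symm_apply_apply] at this
          exact this.le
        have := csInf_le hbdd hmem
        calc f z ≤ f (f.symm z) := f.monotone this
        _ = z := f.apply_symm_apply z
      exact hnc ⟨z, le_antisymm hfz_le hfz_ge, hgz⟩
  refine ⟨hf, hinv, ?_⟩
  intro x hx
  have h2 := hinv x hx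
  rw [Set.uIcc, g.image_Icc, g.map_inf, g.map_sup, hx, h2]
end

section
/- Let f be an orientation-preserving homeomorphism of ℝ with f(x) = x + 1, let I = [x₀, x₀+1], and let h : I → I be an orientation-preserving homeomorphism fixing the endpoints. Then for each ε ∈ {+1, -1} there exists a unique orientation-preserving homeomorphism g of ℝ with g|_I = h and f ∘ g ∘ f⁻¹ = g^ε; it is given on fⁿ(I) by g = fⁿ ∘ h^{εⁿ} ∘ f⁻ⁿ. -/
/-!
Cut ℝ into the tiles `[x₀ + n, x₀ + n + 1]`. Since `f` is the unit translation, the relation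
`f g f⁻¹ = g^ε` says that `g` on the tile number `n` is the translate of `g^ε` on tile `n - 1`,
so by induction it is the translate of `h ^ (ε ^ n)` (that is, `h` or `h⁻¹`). Conversely, stacking
these translates gives a strictly monotone bijection of ℝ, the pieces agreeing on the common
endpoints of neighbouring tiles because homeomorphisms of `[x₀, x₀ + 1]` fix both endpoints.
-/

open Set

section IccEndpoints

variable {α : Type*} [PartialOrder α] {a b : α}

theorem OrderIso.Icc_apply_left (k : Icc a b ≃o Icc a b) (hab : a ≤ b) :
    k ⟨a, left_mem_Icc.2 hab⟩ = ⟨a, left_mem_Icc.2 hab⟩ :=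
  k.map_bot' (fun v => v.2.1) (fun v => v.2.1)

theorem OrderIso.Icc_apply_right (k : Icc a b ≃o Icc a b) (hab : a ≤ b) :
    k ⟨b, right_mem_Icc.2 hab⟩ = ⟨b, right_mem_Icc.2 hab⟩ :=
  k.map_top' (fun v => v.2.2) (fun v => v.2.2)

theorem OrderIso.Icc_coe_apply_lt_right (k : Icc a b ≃o Icc a b) {u : Icc a b}
    (hu : (u : α) < b) : (k u : α) < b := by
  have hab : a ≤ b := u.2.1.trans u.2.2
  have := k.strictMono (show u < ⟨b, right_mem_Icc.2 hab⟩ from hu)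
  rwa [k.Icc_apply_right hab] at this

end IccEndpoints

section TileExtend

variable {x₀ : ℝ}

theorem sub_floor_sub_mem_Ico (x₀ y : ℝ) : y - ⌊y - x₀⌋ ∈ Ico x₀ (x₀ + 1) :=
  ⟨by linarith [Int.floor_le (y - x₀)], by linarith [Int.lt_floor_add_one (y - x₀)]⟩

theorem floor_add_intCast_sub_eq {t : ℝ} (ht : t ∈ Ico x₀ (x₀ + 1)) (n : ℤ) :
    ⌊t + n - x₀⌋ = n := by
  rw [show t + n - x₀ = (t - x₀) + n by ring, Int.floor_add_intCast,
    Int.floor_eq_zero_iff.2 ⟨by linarith [ht.1], by linarith [ht.2]⟩, zero_add]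

theorem forall_add_intCast_of_mem_Ico {P : ℝ → Prop}
    (hP : ∀ t ∈ Ico x₀ (x₀ + 1), ∀ n : ℤ, P (t + n)) (y : ℝ) : P y := by
  simpa using hP _ (sub_floor_sub_mem_Ico x₀ y) ⌊y - x₀⌋

/-- The map acting on the tile `[x₀ + n, x₀ + n + 1)` as the translate by `n` of `K n`. -/
noncomputable def tileExtend (x₀ : ℝ) (K : ℤ → (Icc x₀ (x₀ + 1) ≃o Icc x₀ (x₀ + 1)))
    (y : ℝ) : ℝ :=
  K ⌊y - x₀⌋ ⟨y - ⌊y - x₀⌋, Ico_subset_Icc_self (sub_floor_sub_mem_Ico x₀ y)⟩ + ⌊y - x₀⌋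

variable (K : ℤ → (Icc x₀ (x₀ + 1) ≃o Icc x₀ (x₀ + 1)))

theorem tileExtend_add_intCast_of_mem_Ico {t : ℝ} (ht : t ∈ Ico x₀ (x₀ + 1)) (n : ℤ) :
    tileExtend x₀ K (t + n) = K n ⟨t, Ico_subset_Icc_self ht⟩ + n := by
  simp only [tileExtend, floor_add_intCast_sub_eq ht, add_sub_cancel_right]

theorem tileExtend_add_intCast {t : ℝ} (ht : t ∈ Icc x₀ (x₀ + 1)) (n : ℤ) :
    tileExtend x₀ K (t + n) = K n ⟨t, ht⟩ + n := by
  rcases ht.2.eq_or_lt with rfl | hlt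
  · have hx₀ : x₀ ∈ Ico x₀ (x₀ + 1) := ⟨le_rfl, by linarith⟩
    have hle : x₀ ≤ x₀ + 1 := by linarith
    rw [show x₀ + 1 + (n : ℝ) = x₀ + (n + 1 : ℤ) by push_cast; ring,
      tileExtend_add_intCast_of_mem_Ico K hx₀, (K (n + 1)).Icc_apply_left hle,
      (K n).Icc_apply_right hle]
    push_cast
    ring
  · exact tileExtend_add_intCast_of_mem_Ico K ⟨ht.1, hlt⟩ n

theorem tileExtend_strictMono : StrictMono (tileExtend x₀ K) := by
  intro y y' hyy'
  have hle : ⌊y - x₀⌋ ≤ ⌊y' - x₀⌋ := Int.floor_le_floor (by linarith)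
  rcases hle.lt_or_eq with hlt | heq
  · have h1 := (K ⌊y - x₀⌋).Icc_coe_apply_lt_right
      (u := ⟨_, Ico_subset_Icc_self (sub_floor_sub_mem_Ico x₀ y)⟩)
      (sub_floor_sub_mem_Ico x₀ y).2
    have h2 := (K ⌊y' - x₀⌋ ⟨_, Ico_subset_Icc_self (sub_floor_sub_mem_Ico x₀ y')⟩).2.1
    have h3 : (⌊y - x₀⌋ : ℝ) + 1 ≤ ⌊y' - x₀⌋ := by exact_mod_cast hlt
    simp only [tileExtend]
    linarith
  · simp only [tileExtend, heq]
    gcongr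

theorem tileExtend_symm_rightInverse :
    Function.RightInverse (tileExtend x₀ fun n => (K n).symm) (tileExtend x₀ K) := by
  intro y
  have hy := sub_floor_sub_mem_Ico x₀ y
  set u : Icc x₀ (x₀ + 1) := (K ⌊y - x₀⌋).symm ⟨_, Ico_subset_Icc_self hy⟩
  have hu : (u : ℝ) ∈ Ico x₀ (x₀ + 1) :=
    ⟨u.2.1, (K ⌊y - x₀⌋).symm.Icc_coe_apply_lt_right hy.2⟩
  change tileExtend x₀ K (u + ⌊y - x₀⌋) = y
  rw [tileExtend_add_intCast_of_mem_Ico K hu, Subtype.coe_eta, OrderIso.apply_symm_apply,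
    sub_add_cancel]

noncomputable def tileExtendIso : ℝ ≃o ℝ :=
  (tileExtend_strictMono K).orderIsoOfRightInverse _ _ (tileExtend_symm_rightInverse K)

theorem tileExtendIso_apply (y : ℝ) : tileExtendIso K y = tileExtend x₀ K y := rfl

theorem tileExtendIso_symm_apply (y : ℝ) :
    (tileExtendIso K).symm y = tileExtend x₀ (fun n => (K n).symm) y := by
  rw [OrderIso.symm_apply_eq, tileExtendIso_apply, tileExtend_symm_rightInverse]

theorem tileExtend_sub_one_add_one (y : ℝ) :
    tileExtend x₀ K (y - 1) + 1 = tileExtend x₀ (fun n => K (n - 1)) y := by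
  induction y using forall_add_intCast_of_mem_Ico (x₀ := x₀) with
  | hP t ht n =>
    rw [show t + n - 1 = t + ((n - 1 : ℤ) : ℝ) by push_cast; ring,
      tileExtend_add_intCast_of_mem_Ico K ht, tileExtend_add_intCast_of_mem_Ico _ ht]
    push_cast
    ring

end TileExtend

section AltPow

variable {I : Type*} [LE I] (h : I ≃o I) (ε : ℤ)

/-- `h ^ (ε ^ n)` for `ε = ±1`. -/
def altPow (n : ℤ) : I ≃o I := if ε = 1 ∨ Even n then h else h.symm

theorem altPow_of_eq_one (hε : ε = 1) : altPow h ε = fun _ => h :=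
  funext fun _ => if_pos (Or.inl hε)

theorem altPow_sub_one_of_ne_one (hε : ε ≠ 1) (n : ℤ) :
    altPow h ε (n - 1) = (altPow h ε n).symm := by
  by_cases hn : Even n <;> simp [altPow, hε, hn]

end AltPow

open Set in
theorem stmt_17_general (f : ℝ ≃o ℝ) (hf : ∀ x : ℝ, f x = x + 1) (x₀ : ℝ)
    (h : Icc x₀ (x₀ + 1) ≃o Icc x₀ (x₀ + 1)) (ε : ℤ) :
    ∃! g : ℝ ≃o ℝ,
      (∀ y : ℝ, ∀ hy : y ∈ Icc x₀ (x₀ + 1), g y = (h ⟨y, hy⟩ : ℝ)) ∧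
      (∀ y : ℝ, f (g (f.symm y)) = if ε = 1 then g y else g.symm y) ∧
      (∀ n : ℤ, ∀ y : ℝ, ∀ hy : y ∈ Icc x₀ (x₀ + 1),
        g (y + n) =
          (if ε = 1 ∨ Even n then (h ⟨y, hy⟩ : ℝ) else (h.symm ⟨y, hy⟩ : ℝ)) + n) := by
  have tiles : ∀ n : ℤ, ∀ y : ℝ, ∀ hy : y ∈ Icc x₀ (x₀ + 1),
      tileExtendIso (altPow h ε) (y + n) =
        (if ε = 1 ∨ Even n then (h ⟨y, hy⟩ : ℝ) else (h.symm ⟨y, hy⟩ : ℝ)) + n :=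
    fun n y hy => by
      rw [tileExtendIso_apply, tileExtend_add_intCast _ hy, altPow]
      split_ifs <;> rfl
  have hf_symm : ∀ y, f.symm y = y - 1 := fun y => f.symm_apply_eq.2 (by rw [hf]; ring)
  refine ⟨tileExtendIso (altPow h ε), ⟨fun y hy => by simpa using tiles 0 y hy, fun y => ?_,
    tiles⟩, ?_⟩
  · rw [hf_symm, hf, tileExtendIso_apply, tileExtend_sub_one_add_one]
    split_ifs with hε
    · simp only [altPow_of_eq_one h ε hε, tileExtendIso_apply]
    · simp only [altPow_sub_one_of_ne_one h ε hε, tileExtendIso_symm_apply]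
  · rintro g' ⟨-, -, hg'⟩
    ext y
    induction y using forall_add_intCast_of_mem_Ico (x₀ := x₀) with
    | hP t ht n => rw [hg' n t (Ico_subset_Icc_self ht), tiles n t (Ico_subset_Icc_self ht)]

open Set in
/-- Let `f` be the translation `x ↦ x + 1`, `I = [x₀, x₀+1]`, and `h` an
orientation-preserving homeomorphism of `I` (fixing the endpoints). For `ε ∈ {1, -1}`
there is a unique orientation-preserving homeomorphism `g` of ℝ with `g|_I = h` and
`f ∘ g ∘ f⁻¹ = g^ε`, given on `fⁿ(I)` by `g = fⁿ ∘ h^{εⁿ} ∘ f⁻ⁿ`. -/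
theorem stmt_17 (f : ℝ ≃o ℝ) (hf : ∀ x : ℝ, f x = x + 1) (x₀ : ℝ)
    (h : Icc x₀ (x₀ + 1) ≃o Icc x₀ (x₀ + 1)) (ε : ℤ) (hε : ε = 1 ∨ ε = -1) :
    ∃! g : ℝ ≃o ℝ,
      (∀ y : ℝ, ∀ hy : y ∈ Icc x₀ (x₀ + 1), g y = (h ⟨y, hy⟩ : ℝ)) ∧
      (∀ y : ℝ, f (g (f.symm y)) = if ε = 1 then g y else g.symm y) ∧
      (∀ n : ℤ, ∀ y : ℝ, ∀ hy : y ∈ Icc x₀ (x₀ + 1),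
        g (y + n) =
          (if ε = 1 ∨ Even n then (h ⟨y, hy⟩ : ℝ) else (h.symm ⟨y, hy⟩ : ℝ)) + n) :=
  stmt_17_general f hf x₀ h ε
end

section
/- Let α, β, γ, δ be homeomorphisms of ℝ² with: β commuting with α, γ, δ; α⁶ γ α⁻⁶ = γ⁻¹; α⁶ δ α⁻⁶ = δ⁻¹; the elements g_k = α^k δ⁻² γ δ² α⁻^k (0 ≤ k ≤ 11) pairwise commuting; and β = g₀² g₁² ⋯ g₁₁². Then for any faithful action of the group H = ⟨α, β, γ, δ⟩ on ℝ by orientation-preserving homeomorphisms and any connected component I of ℝ \ Fix(α), the set Fix(β) ∩ I is infinite. -/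
/-!
Let `I` be the component of `ℝ ∖ Fix α` containing `x`; every homeomorphism fixing `Fix α`
pointwise maps `I` into itself. A relation `F C F⁻¹ = C⁻¹` with `F` increasing makes `C` fix
every fixed point of `F`, so `δ` fixes `Fix α` pointwise; and it prevents `C` from being free on
an `F`-invariant interval, since `C` and `C⁻¹` would push it in the same direction, so `γ` has a
fixed point in `I`. Hence each `g_k`, a conjugate of `γ` by a map preserving `I`, has a fixed
point in `I`. Commuting maps that each fix a point of an interval have a common fixed point there
(repeatedly pass to the fixed point of the next map closest to the current common one), so `β`
fixes some `q ∈ I`; commuting with `α`, it fixes the whole `α`-orbit of `q`, which is infinite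
and stays in `I`.
-/

open Set Function MulAction

section LinearOrder

variable {α : Type*} [LinearOrder α]

lemma Monotone.apply_eq_self_of_apply_apply_eq {f : α → α} (hf : Monotone f) {x : α}
    (h : f (f x) = x) : f x = x := by
  rcases le_total (f x) x with hle | hge
  · exact le_antisymm hle (by simpa only [h] using hf hle)
  · exact le_antisymm (by simpa only [h] using hf hge) hge

lemma StrictMono.injective_iterate_of_apply_ne {f : α → α} (hf : StrictMono f) {x : α}
    (hx : f x ≠ x) : Injective fun n => f^[n] x := by
  rcases hx.lt_or_gt with hlt | hgt
  · exact (hf.strictAnti_iterate_of_map_lt hlt).injective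
  · exact (hf.strictMono_iterate_of_lt_map hgt).injective

namespace OrderIso

lemma apply_eq_self_of_conj_eq_inv {F C : α ≃o α} (hFC : F * C * F⁻¹ = C⁻¹) {x : α}
    (hx : F x = x) : C x = x := by
  have hFC' : ∀ z, F (C z) = C⁻¹ (F z) := DFunLike.congr_fun (mul_inv_eq_iff_eq_mul.mp hFC)
  have hFC'' : ∀ z, F (C⁻¹ z) = C (F z) := by
    have : F * C⁻¹ * F⁻¹ = C := by rw [← conj_inv, hFC, inv_inv]
    exact DFunLike.congr_fun (mul_inv_eq_iff_eq_mul.mp this)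
  have hFCx : F (C x) = C x :=
    F.monotone.apply_eq_self_of_apply_apply_eq (by rw [hFC', hx, hFC'', hx])
  have hCx : C x = C⁻¹ x := by rw [← hFCx, hFC', hx]
  refine C.monotone.apply_eq_self_of_apply_apply_eq ?_
  rw [hCx]
  exact C.apply_inv_self x

lemma eq_of_mem_uIcc_of_apply_eq (g : α ≃o α) {y w : α} (hw : w ∈ uIcc y (g y))
    (hgw : g w = w) : w = y := by
  have hwg : w = g y := by
    rcases le_total y (g y) with hy | hy
    · rw [uIcc_of_le hy] at hw
      exact le_antisymm hw.2 (hgw ▸ g.monotone hw.1)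
    · rw [uIcc_of_ge hy] at hw
      exact le_antisymm (hgw ▸ g.monotone hw.2) hw.1
  rw [hwg] at hgw ⊢
  exact g.injective hgw

end OrderIso

end LinearOrder

section OrderTopology

variable {α : Type*} [ConditionallyCompleteLinearOrder α] [TopologicalSpace α] [OrderTopology α]

namespace OrderIso

/-- The witness is the largest fixed point of `g` below `a`, which is canonical enough to be
fixed by everything that fixes `a` and commutes with `g`. -/
lemma exists_mem_Icc_isFixedPt_of_commute {g : α ≃o α} {a b : α} (hba : b ≤ a)
    (hb : IsFixedPt g b) :
    ∃ q ∈ Icc b a, IsFixedPt g q ∧ ∀ h : α ≃o α, IsFixedPt h a → Commute h g → IsFixedPt h q := by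
  set K := Iic a ∩ fixedPoints g
  have hK : IsClosed K := isClosed_Iic.inter (isClosed_eq g.continuous continuous_id)
  have hne : K.Nonempty := ⟨b, hba, hb⟩
  have hbdd : BddAbove K := ⟨a, fun y hy => hy.1⟩
  obtain ⟨hqa, hq⟩ := hK.csSup_mem hne hbdd
  have hmaps : ∀ h : α ≃o α, h a = a → Commute h g → h (sSup K) ∈ K := fun h hha hhg =>
    ⟨hha ▸ h.monotone hqa, IsFixedPt.map (g := h) hq fun x => DFunLike.congr_fun hhg.eq x⟩
  refine ⟨sSup K, ⟨le_csSup hbdd ⟨hba, hb⟩, hqa⟩, hq, fun h hha hhg => ?_⟩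
  refine le_antisymm (le_csSup hbdd (hmaps h hha hhg)) ?_
  have := le_csSup hbdd (hmaps h⁻¹ (by rw [← hha, h.inv_apply_self, hha]) hhg.inv_left)
  exact h.symm_apply_le.mp this

lemma exists_mem_uIcc_isFixedPt_of_commute {g : α ≃o α} (a : α) {b : α} (hb : IsFixedPt g b) :
    ∃ q ∈ uIcc a b, IsFixedPt g q ∧
      ∀ h : α ≃o α, IsFixedPt h a → Commute h g → IsFixedPt h q := by
  rcases le_total b a with hba | hab
  · obtain ⟨q, hq, hgq, hfix⟩ := exists_mem_Icc_isFixedPt_of_commute hba hb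
    exact ⟨q, Icc_subset_uIcc' hq, hgq, hfix⟩
  · obtain ⟨q, hq, hgq, hfix⟩ :=
      exists_mem_Icc_isFixedPt_of_commute (α := αᵒᵈ) (g := g.dual) (a := OrderDual.toDual a)
        (b := OrderDual.toDual b) hab hb
    exact ⟨OrderDual.ofDual q, Icc_subset_uIcc ⟨hq.2, hq.1⟩, hgq,
      fun h hha hhg => hfix h.dual hha (DFunLike.ext _ _ fun z => DFunLike.congr_fun hhg.eq z)⟩

end OrderIso

lemma Set.OrdConnected.exists_forall_apply_eq_self_of_pairwise_commute {s : Set α}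
    (hs : s.OrdConnected) (hne : s.Nonempty) {ι : Type*} (g : ι → α ≃o α) (t : Finset ι)
    (hcomm : (t : Set ι).Pairwise fun i j => Commute (g i) (g j))
    (hfix : ∀ i ∈ t, ∃ y ∈ s, g i y = y) : ∃ q ∈ s, ∀ i ∈ t, g i q = q := by
  induction t using Finset.cons_induction with
  | empty => exact ⟨hne.some, hne.some_mem, by simp⟩
  | cons i t hi ih =>
    simp only [Finset.coe_cons, Set.pairwise_insert] at hcomm
    obtain ⟨q₀, hq₀s, hq₀⟩ := ih hcomm.1 fun j hj => hfix j (Finset.mem_cons_of_mem hj)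
    obtain ⟨b, hbs, hb⟩ := hfix i (Finset.mem_cons_self i t)
    obtain ⟨q, hq, hiq, hq_fix⟩ := OrderIso.exists_mem_uIcc_isFixedPt_of_commute q₀ hb
    refine ⟨q, hs.uIcc_subset hq₀s hbs hq, (Finset.forall_mem_cons hi _).2 ⟨hiq, fun j hj => ?_⟩⟩
    exact hq_fix (g j) (hq₀ j hj) (hcomm.2 j hj fun hji => hi (hji ▸ hj)).2

lemma IsPreconnected.exists_apply_eq_self_of_conj_eq_inv {s : Set α} (hs : IsPreconnected s)
    {F C : α ≃o α} (hFC : F * C * F⁻¹ = C⁻¹) {x : α} (hx : x ∈ s) (hFx : F x ∈ s) :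
    ∃ y ∈ s, C y = y := by
  have hCF : C (F x) = F (C⁻¹ x) := by
    have : F * C⁻¹ * F⁻¹ = C := by rw [← conj_inv, hFC, inv_inv]
    exact (DFunLike.congr_fun (mul_inv_eq_iff_eq_mul.mp this) x).symm
  rcases le_total (C x) x with hle | hge
  · have : F x ≤ C (F x) := hCF ▸ F.monotone (C.le_symm_apply.mpr hle)
    exact hs.intermediate_value₂ hx hFx C.continuous.continuousOn continuousOn_id hle this
  · have : C (F x) ≤ F x := hCF ▸ F.monotone (C.symm_apply_le.mpr hge)
    obtain ⟨y, hys, hy⟩ :=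
      hs.intermediate_value₂ hx hFx continuousOn_id C.continuous.continuousOn hge this
    exact ⟨y, hys, hy.symm⟩

variable [DenselyOrdered α]

lemma mapsTo_connectedComponentIn_compl_of_mem_fixingSubgroup {s : Set α} {g : α ≃o α}
    (hg : g ∈ fixingSubgroup (α ≃o α) s) (x : α) :
    MapsTo g (connectedComponentIn sᶜ x) (connectedComponentIn sᶜ x) := by
  intro y hy
  have hsub : uIcc y (g y) ⊆ sᶜ := fun w hw hws =>
    connectedComponentIn_subset _ _ hy
      (g.eq_of_mem_uIcc_of_apply_eq hw ((mem_fixingSubgroup_iff _).mp hg w hws) ▸ hws)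
  rw [connectedComponentIn_eq hy]
  exact isPreconnected_uIcc.subset_connectedComponentIn left_mem_uIcc hsub right_mem_uIcc

theorem infinite_connectedComponentIn_inter_fixedPoints_of_mem_closure {A B C : α ≃o α}
    {m : ℕ} (hC : A ^ m * C * (A ^ m)⁻¹ = C⁻¹) {ι : Type*} (t : Finset ι) (g : ι → α ≃o α)
    (hg : ∀ i ∈ t, ∃ W ∈ fixingSubgroup (α ≃o α) (fixedPoints A), g i = W * C * W⁻¹)
    (hcomm : (t : Set ι).Pairwise fun i j => Commute (g i) (g j))
    (hB : B ∈ Subgroup.closure (g '' t)) (hBA : Commute B A) {x : α} (hx : A x ≠ x) :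
    (connectedComponentIn (fixedPoints A)ᶜ x ∩ fixedPoints B).Infinite := by
  set I := connectedComponentIn (fixedPoints A)ᶜ x
  have hxI : x ∈ I := mem_connectedComponentIn hx
  have hA : A ∈ fixingSubgroup (α ≃o α) (fixedPoints A) :=
    (mem_fixingSubgroup_iff _).2 fun _ h => h
  have hAI : MapsTo A I I := mapsTo_connectedComponentIn_compl_of_mem_fixingSubgroup hA x
  obtain ⟨e, heI, hCe⟩ := isPreconnected_connectedComponentIn.exists_apply_eq_self_of_conj_eq_inv
    hC hxI (mapsTo_connectedComponentIn_compl_of_mem_fixingSubgroup (pow_mem hA m) x hxI)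
  have hgfix : ∀ i ∈ t, ∃ y ∈ I, g i y = y := by
    intro i hi
    obtain ⟨W, hW, hgi⟩ := hg i hi
    refine ⟨W e, mapsTo_connectedComponentIn_compl_of_mem_fixingSubgroup hW x heI, ?_⟩
    rw [hgi, RelIso.mul_apply, RelIso.mul_apply, RelIso.inv_apply_self, hCe]
  obtain ⟨q, hqI, hq⟩ := isPreconnected_connectedComponentIn.ordConnected
    |>.exists_forall_apply_eq_self_of_pairwise_commute ⟨x, hxI⟩ g t hcomm hgfix
  have hBq : B q = q := by
    have : Subgroup.closure (g '' t) ≤ stabilizer (α ≃o α) q :=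
      Subgroup.closure_le _ |>.2 <| by rintro _ ⟨i, hi, rfl⟩; exact hq i hi
    exact this hB
  have hBA' : Function.Commute B A := fun z => DFunLike.congr_fun hBA.eq z
  refine Set.infinite_of_injective_forall_mem
    (A.strictMono.injective_iterate_of_apply_ne (connectedComponentIn_subset _ _ hqI))
    fun k => ⟨hAI.iterate k hqI, ?_⟩
  rw [mem_fixedPoints, IsFixedPt, hBA'.iterate_right k q, hBq]

theorem infinite_connectedComponentIn_inter_fixedPoints_of_klein_relations {A B C D : α ≃o α}
    {m n : ℕ} (g : ℕ → α ≃o α) (hg : ∀ k, g k = A ^ k * D⁻¹ ^ 2 * C * D ^ 2 * (A ^ k)⁻¹)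
    (hC : A ^ m * C * (A ^ m)⁻¹ = C⁻¹) (hD : A ^ m * D * (A ^ m)⁻¹ = D⁻¹)
    (hcomm : ∀ k < n, ∀ l < n, Commute (g k) (g l))
    (hB : B = ((List.range n).map fun k => g k ^ 2).prod) (hBA : Commute B A) {x : α}
    (hx : A x ≠ x) : (connectedComponentIn (fixedPoints A)ᶜ x ∩ fixedPoints B).Infinite := by
  have hA : A ∈ fixingSubgroup (α ≃o α) (fixedPoints A) :=
    (mem_fixingSubgroup_iff _).2 fun _ h => h
  have hDA : D ∈ fixingSubgroup (α ≃o α) (fixedPoints A) := (mem_fixingSubgroup_iff _).2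
    fun z hz => OrderIso.apply_eq_self_of_conj_eq_inv hD
      ((mem_fixingSubgroup_iff _).1 (pow_mem hA m) z hz)
  refine infinite_connectedComponentIn_inter_fixedPoints_of_mem_closure hC (Finset.range n) g
    (fun k _ => ⟨A ^ k * D⁻¹ ^ 2, mul_mem (pow_mem hA k) (pow_mem (inv_mem hDA) 2), by
      rw [hg]; group⟩)
    (fun k hk l hl _ => hcomm k (Finset.mem_range.1 hk) l (Finset.mem_range.1 hl)) ?_ hBA hx
  rw [hB]
  refine list_prod_mem fun _ hh => ?_
  obtain ⟨k, hk, rfl⟩ := List.mem_map.1 hh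
  exact pow_mem (Subgroup.subset_closure (mem_image_of_mem g (by simpa using hk))) 2

end OrderTopology

open Set in
theorem stmt_18_general {G : Type*} [Group G] (α β γ δ : G)
    (gk : ℕ → G)
    (hgk : ∀ k : ℕ, gk k = α ^ k * δ⁻¹ ^ 2 * γ * δ ^ 2 * (α ^ k)⁻¹)
    (hβα : Commute β α)
    (hγrel : α ^ 6 * γ * (α ^ 6)⁻¹ = γ⁻¹)
    (hδrel : α ^ 6 * δ * (α ^ 6)⁻¹ = δ⁻¹)
    (hcomm : ∀ k l : ℕ, k ≤ 11 → l ≤ 11 → Commute (gk k) (gk l))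
    (hβ : β = ((List.range 12).map fun k => gk k ^ 2).prod) :
    ∀ ρ : (Subgroup.closure {α, β, γ, δ} : Subgroup G) →* (ℝ ≃o ℝ),
      Function.Injective ρ →
      ∀ a b : (Subgroup.closure {α, β, γ, δ} : Subgroup G),
        (a : G) = α → (b : G) = β →
        ∀ x : ℝ, ρ a x ≠ x →
          {y ∈ connectedComponentIn {z : ℝ | ρ a z ≠ z} x | ρ b y = y}.Infinite := by
  intro ρ _ a b ha hb x hx
  set c : Subgroup.closure {α, β, γ, δ} := ⟨γ, Subgroup.subset_closure (by simp)⟩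
  set d : Subgroup.closure {α, β, γ, δ} := ⟨δ, Subgroup.subset_closure (by simp)⟩
  set e : ℕ → Subgroup.closure {α, β, γ, δ} := fun k => a ^ k * d⁻¹ ^ 2 * c * d ^ 2 * (a ^ k)⁻¹
  have he : ∀ k, (e k : G) = gk k := by simp [e, c, d, hgk, ha]
  have hc : a ^ 6 * c * (a ^ 6)⁻¹ = c⁻¹ := Subtype.ext (by simpa [c, ha] using hγrel)
  have hd : a ^ 6 * d * (a ^ 6)⁻¹ = d⁻¹ := Subtype.ext (by simpa [d, ha] using hδrel)
  have hba : Commute b a := Subtype.ext (by simpa [ha, hb] using hβα.eq)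
  have hee : ∀ k l, k ≤ 11 → l ≤ 11 → Commute (e k) (e l) := fun k l hk hl =>
    Subtype.ext (by simpa [he] using (hcomm k l hk hl).eq)
  have hbe : b = ((List.range 12).map fun k => e k ^ 2).prod :=
    Subtype.ext (by simp [hb, hβ, he, Function.comp_def])
  exact infinite_connectedComponentIn_inter_fixedPoints_of_klein_relations (B := ρ b)
    (C := ρ c) (D := ρ d) (m := 6) (n := 12) (fun k => ρ (e k)) (by simp [e])
    (by simpa using congrArg ρ hc) (by simpa using congrArg ρ hd)
    (fun k hk l hl => (hee k l (by omega) (by omega)).map ρ)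
    (by simp [hbe, map_list_prod, Function.comp_def]) (hba.map ρ) hx

open Set in
/-- Let `α, β, γ, δ` generate a group `H` with: `β` central among the generators,
`α⁶ γ α⁻⁶ = γ⁻¹`, `α⁶ δ α⁻⁶ = δ⁻¹`, the elements `g_k = αᵏ δ⁻² γ δ² α⁻ᵏ`
(`0 ≤ k ≤ 11`) pairwise commuting, and `β = g₀² g₁² ⋯ g₁₁²`. Then for any faithful
action of `H` on ℝ by orientation-preserving homeomorphisms and any connected component
`I` of `ℝ \ Fix α`, the set `Fix β ∩ I` is infinite. -/
theorem stmt_18 {G : Type*} [Group G] (α β γ δ : G)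
    (gk : ℕ → G)
    (hgk : ∀ k : ℕ, gk k = α ^ k * δ⁻¹ ^ 2 * γ * δ ^ 2 * (α ^ k)⁻¹)
    (hβα : Commute β α) (hβγ : Commute β γ) (hβδ : Commute β δ)
    (hγrel : α ^ 6 * γ * (α ^ 6)⁻¹ = γ⁻¹)
    (hδrel : α ^ 6 * δ * (α ^ 6)⁻¹ = δ⁻¹)
    (hcomm : ∀ k l : ℕ, k ≤ 11 → l ≤ 11 → Commute (gk k) (gk l))
    (hβ : β = ((List.range 12).map fun k => gk k ^ 2).prod) :
    ∀ ρ : (Subgroup.closure {α, β, γ, δ} : Subgroup G) →* (ℝ ≃o ℝ),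
      Function.Injective ρ →
      ∀ a b : (Subgroup.closure {α, β, γ, δ} : Subgroup G),
        (a : G) = α → (b : G) = β →
        ∀ x : ℝ, ρ a x ≠ x →
          {y ∈ connectedComponentIn {z : ℝ | ρ a z ≠ z} x | ρ b y = y}.Infinite :=
  stmt_18_general α β γ δ gk hgk hβα hγrel hδrel hcomm hβ
end
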